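/- Let (X, μ) be a finite measure space and let φ : X × X → ℂ be a bounded measurable function. Assume that Schur multiplication by φ is positive on Hilbert–Schmidt operators, i.e. for every f ∈ L²(X × X, μ ⊗ μ) such that for all ξ ∈ L²(X, μ) the integral ∫_X ∫_X f(x, y) * ξ(y) * conj (ξ(x)) dμ(y) dμ(x) is a nonnegative real number, it also holds that for all ξ ∈ L²(X, μ) the integral ∫_X ∫_X φ(x, y) * f(x, y) * ξ(y) * conj (ξ(x)) dμ(y) dμ(x) is a nonnegative real number. Then φ is an integrally positive definite kernel. -/

import Mathlib

/-!
Testing the Schur multiplier on the constant kernel `1`, which is positive because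
`∫∫ ξ(y) conj(ξ(x)) = |∫ ξ|²`, shows that the quadratic form of `φ` itself is nonnegative on
`L²`, in particular on bounded functions. A function `ξ ∈ L¹` is the pointwise limit of its
truncations `ξ · 1_{|ξ| ≤ n}`, and since `φ` is bounded the integrands are dominated by
`C |ξ(x)| |ξ(y)|`, so dominated convergence carries nonnegativity over to `ξ`.
-/

open MeasureTheory Filter Topology ComplexOrder
open scoped ENNReal

section

variable {X Y : Type*}

theorem integrable_kernel_mul_conj_mul [MeasurableSpace X] [MeasurableSpace Y]
    {μ : Measure X} {ν : Measure Y} {φ : X → Y → ℂ} {C : ℝ}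
    (hφ : AEStronglyMeasurable (fun p : X × Y => φ p.1 p.2) (μ.prod ν))
    (hC : ∀ x y, ‖φ x y‖ ≤ C) {ξ : X → ℂ} {η : Y → ℂ} (hξ : Integrable ξ μ)
    (hη : Integrable η ν) :
    Integrable (fun p : X × Y => φ p.1 p.2 * starRingEnd ℂ (ξ p.1) * η p.2) (μ.prod ν) := by
  have hξ_conj : Integrable (fun x => starRingEnd ℂ (ξ x)) μ :=
    Complex.conjCLE.toContinuousLinearMap.integrable_comp hξ
  simp_rw [mul_assoc]
  exact (hξ_conj.mul_prod hη).bdd_mul hφ (.of_forall fun p => hC p.1 p.2)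

theorem integral_integral_mul_conj [MeasurableSpace X] (μ : Measure X) (ξ : X → ℂ) :
    ∫ x, ∫ y, ξ y * starRingEnd ℂ (ξ x) ∂μ ∂μ = Complex.normSq (∫ x, ξ x ∂μ) := by
  simp_rw [integral_mul_const, integral_const_mul, integral_conj, Complex.mul_conj]

/-- The quadratic form `⟪ξ, K_φ ξ⟫` of the integral operator with kernel `φ`. -/
noncomputable def kernelForm [MeasurableSpace X] (μ : Measure X) (φ : X → X → ℂ) (ξ : X → ℂ) :
    ℂ :=
  ∫ p, φ p.1 p.2 * starRingEnd ℂ (ξ p.1) * ξ p.2 ∂(μ.prod μ)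

noncomputable def truncateNorm (r : ℝ) (ξ : X → ℂ) (x : X) : ℂ :=
  (Metric.closedBall 0 r).indicator id (ξ x)

section Truncation

variable {ξ : X → ℂ}

theorem norm_truncateNorm_le_norm (r : ℝ) (x : X) : ‖truncateNorm r ξ x‖ ≤ ‖ξ x‖ :=
  norm_indicator_le_norm_self _ _

theorem norm_truncateNorm_le {r : ℝ} (hr : 0 ≤ r) (x : X) : ‖truncateNorm r ξ x‖ ≤ r := by
  by_cases h : ξ x ∈ Metric.closedBall 0 r
  · rw [truncateNorm, Set.indicator_of_mem h]
    exact mem_closedBall_zero_iff.1 h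
  · rw [truncateNorm, Set.indicator_of_notMem h, norm_zero]
    exact hr

theorem truncateNorm_of_norm_le {r : ℝ} {x : X} (h : ‖ξ x‖ ≤ r) : truncateNorm r ξ x = ξ x :=
  Set.indicator_of_mem (mem_closedBall_zero_iff.2 h) _

theorem eventually_truncateNorm_eq (x : X) : ∀ᶠ n : ℕ in atTop, truncateNorm n ξ x = ξ x :=
  (tendsto_natCast_atTop_atTop.eventually_ge_atTop ‖ξ x‖).mono
    fun _ hn => truncateNorm_of_norm_le hn

variable [MeasurableSpace X] {μ : Measure X}

theorem aestronglyMeasurable_truncateNorm (hξ : AEStronglyMeasurable ξ μ) (r : ℝ) :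
    AEStronglyMeasurable (truncateNorm r ξ) μ :=
  ((measurable_id.indicator Metric.isClosed_closedBall.measurableSet).comp_aemeasurable
    hξ.aemeasurable).aestronglyMeasurable

theorem integrable_truncateNorm (hξ : Integrable ξ μ) (r : ℝ) :
    Integrable (truncateNorm r ξ) μ :=
  hξ.mono (aestronglyMeasurable_truncateNorm hξ.aestronglyMeasurable r)
    (.of_forall fun x => norm_truncateNorm_le_norm r x)

theorem memLp_top_truncateNorm (hξ : AEStronglyMeasurable ξ μ) {r : ℝ} (hr : 0 ≤ r) :
    MemLp (truncateNorm r ξ) ∞ μ :=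
  memLp_top_of_bound (aestronglyMeasurable_truncateNorm hξ r) r
    (.of_forall (norm_truncateNorm_le hr))

end Truncation

section KernelForm

variable [MeasurableSpace X] {μ : Measure X} {φ : X → X → ℂ} {C : ℝ}
  (hφ : AEStronglyMeasurable (fun p : X × X => φ p.1 p.2) (μ.prod μ)) (hC : ∀ x y, ‖φ x y‖ ≤ C)
include hφ hC

theorem tendsto_kernelForm_truncateNorm {ξ : X → ℂ} (hξ : Integrable ξ μ) :
    Tendsto (fun n : ℕ => kernelForm μ φ (truncateNorm n ξ)) atTop (𝓝 (kernelForm μ φ ξ)) := by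
  refine tendsto_integral_of_dominated_convergence
    (fun p => ‖φ p.1 p.2 * starRingEnd ℂ (ξ p.1) * ξ p.2‖)
    (fun n => (integrable_kernel_mul_conj_mul hφ hC (integrable_truncateNorm hξ n)
      (integrable_truncateNorm hξ n)).aestronglyMeasurable)
    (integrable_kernel_mul_conj_mul hφ hC hξ hξ).norm (fun n => .of_forall fun p => ?_)
    (.of_forall fun p => tendsto_const_nhds.congr' ?_)
  · simp only [norm_mul, Complex.norm_conj]
    gcongr <;> exact norm_truncateNorm_le_norm _ _
  · filter_upwards [eventually_truncateNorm_eq (ξ := ξ) p.1, eventually_truncateNorm_eq p.2]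
      with n h₁ h₂
    rw [h₁, h₂]

theorem kernelForm_nonneg_of_bounded
    (h : ∀ η : X → ℂ, MemLp η ∞ μ → Integrable η μ → 0 ≤ kernelForm μ φ η)
    {ξ : X → ℂ} (hξ : Integrable ξ μ) : 0 ≤ kernelForm μ φ ξ :=
  ge_of_tendsto' (tendsto_kernelForm_truncateNorm hφ hC hξ) fun n =>
    h _ (memLp_top_truncateNorm hξ.aestronglyMeasurable n.cast_nonneg)
      (integrable_truncateNorm hξ n)

end KernelForm

end

/-- On a finite measure space, if Schur multiplication by the bounded measurable symbol `φ`
maps positive Hilbert–Schmidt kernel operators to positive kernel operators, then `φ` is an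
integrally positive definite kernel. -/
theorem integrallyPosDef_of_positive_schurMultiplier
    {X : Type*} [MeasurableSpace X] (μ : Measure X) [IsFiniteMeasure μ]
    (φ : X → X → ℂ) (hmeas : Measurable fun p : X × X => φ p.1 p.2)
    (hbdd : ∃ C : ℝ, ∀ x y : X, ‖φ x y‖ ≤ C)
    (hpos : ∀ f : X → X → ℂ, MemLp (fun p : X × X => f p.1 p.2) 2 (μ.prod μ) →
      (∀ ξ : X → ℂ, MemLp ξ 2 μ →
        (∫ x, ∫ y, f x y * ξ y * starRingEnd ℂ (ξ x) ∂μ ∂μ).im = 0 ∧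
        0 ≤ (∫ x, ∫ y, f x y * ξ y * starRingEnd ℂ (ξ x) ∂μ ∂μ).re) →
      (∀ ξ : X → ℂ, MemLp ξ 2 μ →
        (∫ x, ∫ y, φ x y * f x y * ξ y * starRingEnd ℂ (ξ x) ∂μ ∂μ).im = 0 ∧
        0 ≤ (∫ x, ∫ y, φ x y * f x y * ξ y * starRingEnd ℂ (ξ x) ∂μ ∂μ).re)) :
    ∀ ξ : X → ℂ, Integrable ξ μ →
      Integrable (fun p : X × X => φ p.1 p.2 * starRingEnd ℂ (ξ p.1) * ξ p.2) (μ.prod μ) ∧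
      (∫ p, φ p.1 p.2 * starRingEnd ℂ (ξ p.1) * ξ p.2 ∂(μ.prod μ)).im = 0 ∧
      0 ≤ (∫ p, φ p.1 p.2 * starRingEnd ℂ (ξ p.1) * ξ p.2 ∂(μ.prod μ)).re := by
  obtain ⟨C, hC⟩ := hbdd
  have hφ : AEStronglyMeasurable _ (μ.prod μ) := hmeas.aestronglyMeasurable
  have hφ_L2 := hpos (fun _ _ => 1) (memLp_const 1) fun η _ => by
    simpa [integral_integral_mul_conj] using Complex.normSq_nonneg _
  have hform : ∀ η : X → ℂ, MemLp η ∞ μ → Integrable η μ → 0 ≤ kernelForm μ φ η := by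
    intro η hη hη_int
    obtain ⟨him, hre⟩ := hφ_L2 η (hη.mono_exponent le_top)
    rw [kernelForm, integral_prod _ (integrable_kernel_mul_conj_mul hφ hC hη_int hη_int)]
    simp_rw [mul_one, mul_right_comm _ (η _)] at him hre
    exact Complex.nonneg_iff.2 ⟨hre, him.symm⟩
  intro ξ hξ
  obtain ⟨hre, him⟩ := Complex.nonneg_iff.1 (kernelForm_nonneg_of_bounded hφ hC hform hξ)
  exact ⟨integrable_kernel_mul_conj_mul hφ hC hξ hξ, him.symm, hre⟩
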